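/- In linear function approximation with batch updates, the divergence between the batch-averaged implicit and explicit TD errors admits the explicit formula δⁱ − δᵉ = (1/B)·Σ_{k=1}^{B} δᵉ_k·((1/B)·Σ_{j=1}^{B} ⟨x_k, x_j⟩ − 1), where δᵉ = (1/B)·Σ_{k=1}^{B} δᵉ_k is the batch-averaged explicit TD error and δⁱ = (1/B)·Σ_{j=1}^{B} (1/α)·(⟨w', x_j⟩ − ⟨w, x_j⟩) is the batch-averaged implicit TD error under the batch semi-gradient update w' = w + (α/B)·Σ_{k=1}^{B} δᵉ_k·x_k with step size α ≠ 0. -/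

import Mathlib

open scoped RealInnerProductSpace
open Finset

section

variable {ι E : Type*} [Fintype ι] [NormedAddCommGroup E] [InnerProductSpace ℝ E]

lemma sum_inner_sum_smul (a : ι → ℝ) (x : ι → E) :
    ∑ j, ⟪∑ k, a k • x k, x j⟫ = ∑ k, a k * ∑ j, ⟪x k, x j⟫ := by
  simp_rw [sum_inner, real_inner_smul_left, mul_sum]
  exact sum_comm

lemma sum_inner_sub_of_eq_add_smul_sum {w w' : E} {c : ℝ} (a : ι → ℝ) (x : ι → E)
    (hw' : w' = w + c • ∑ k, a k • x k) :
    ∑ j, (⟪w', x j⟫ - ⟪w, x j⟫) = c * ∑ k, a k * ∑ j, ⟪x k, x j⟫ := by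
  simp_rw [← inner_sub_left, hw', add_sub_cancel_left, real_inner_smul_left, ← mul_sum,
    sum_inner_sum_smul]

end

theorem batch_td_gap_formula_general
    {d B : ℕ}
    (x : Fin B → EuclideanSpace ℝ (Fin d)) (δe : Fin B → ℝ)
    (w : EuclideanSpace ℝ (Fin d)) (α : ℝ) (hα : α ≠ 0)
    (w' : EuclideanSpace ℝ (Fin d))
    (hupd : w' = w + (α / B) • ∑ k, δe k • x k)
    (δebar δibar : ℝ)
    (hδe : δebar = (1 / B) * ∑ k, δe k)
    (hδi : δibar = (1 / B) * ∑ j, (1 / α) * (⟪w', x j⟫ - ⟪w, x j⟫)) :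
    δibar - δebar
      = (1 / B) * ∑ k, δe k * ((1 / B) * (∑ j, ⟪x k, x j⟫) - 1) := by
  rw [hδi, hδe, ← mul_sum, sum_inner_sub_of_eq_add_smul_sum δe x hupd]
  simp only [mul_sub, mul_one, sum_sub_distrib, mul_left_comm _ (1 / (B : ℝ)), ← mul_sum]
  field_simp

/-- Explicit formula for the divergence between the batch-averaged implicit and explicit
TD errors in linear function approximation with batch updates. -/
theorem batch_td_gap_formula
    {d B : ℕ} (hB : 0 < B)
    (x : Fin B → EuclideanSpace ℝ (Fin d)) (δe : Fin B → ℝ)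
    (w : EuclideanSpace ℝ (Fin d)) (α : ℝ) (hα : α ≠ 0)
    (w' : EuclideanSpace ℝ (Fin d))
    (hupd : w' = w + (α / B) • ∑ k, δe k • x k)
    (δebar δibar : ℝ)
    (hδe : δebar = (1 / B) * ∑ k, δe k)
    (hδi : δibar = (1 / B) * ∑ j, (1 / α) * (⟪w', x j⟫ - ⟪w, x j⟫)) :
    δibar - δebar
      = (1 / B) * ∑ k, δe k * ((1 / B) * (∑ j, ⟪x k, x j⟫) - 1) :=
  batch_td_gap_formula_general x δe w α hα w' hupd δebar δibar hδe hδi
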